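/- arXiv:2407.01806 — 2 statements merged into one kernel-verified Lean document; each statement's English description precedes it below -/
import Mathlib

section
/- Let (𝒢, d) be a metric group in which d is left-invariant, and let CL(𝒢) denote the family of nonempty closed subsets of 𝒢, where for A ∈ CL(𝒢) we write d(x, A) = inf{d(x,a) : a ∈ A}. Suppose (A_n) is a sequence of closed subgroups of 𝒢 and A ∈ CL(𝒢) is a closed set such that d(x, A_n) → d(x, A) for every x ∈ 𝒢 (Wijsman convergence). If multiplication and inversion in 𝒢 are continuous, then A is a closed subgroup of 𝒢. -/
open Filter

/-- A Wijsman limit of closed subgroups of a metrizable topological group with a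
left-invariant metric is again a closed subgroup. -/
theorem wijsman_limit_subgroup {𝒢 : Type*} [Group 𝒢] [MetricSpace 𝒢]
    (hinv : ∀ g a b : 𝒢, dist (g * a) (g * b) = dist a b)
    (hmul : Continuous fun p : 𝒢 × 𝒢 => p.1 * p.2)
    (hinversion : Continuous fun g : 𝒢 => g⁻¹)
    (S : ℕ → Subgroup 𝒢) (hS : ∀ n, IsClosed ((S n : Set 𝒢)))
    (A : Set 𝒢) (hA : IsClosed A) (hAne : A.Nonempty)
    (hconv : ∀ x : 𝒢,
      Tendsto (fun n => Metric.infDist x ((S n : Set 𝒢))) atTop (nhds (Metric.infDist x A))) :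
    ∃ B : Subgroup 𝒢, (B : Set 𝒢) = A := by
  -- A point is in A iff it is the limit of a sequence of points of S n.
  have hmem : ∀ x : 𝒢, (∃ s : ℕ → 𝒢, (∀ n, s n ∈ S n) ∧ Tendsto s atTop (nhds x)) → x ∈ A := by
    rintro x ⟨s, hsmem, hslim⟩
    have hd : Tendsto (fun n => dist x (s n)) atTop (nhds 0) := by
      rw [tendsto_iff_dist_tendsto_zero] at hslim
      simpa [dist_comm] using hslim
    have hle : ∀ n, Metric.infDist x ((S n : Set 𝒢)) ≤ dist x (s n) := fun n =>
      Metric.infDist_le_dist_of_mem (hsmem n)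
    have h1 : Metric.infDist x A ≤ 0 := le_of_tendsto_of_tendsto' (hconv x) hd hle
    have h2 : Metric.infDist x A = 0 := le_antisymm h1 Metric.infDist_nonneg
    exact (hA.mem_iff_infDist_zero hAne).2 h2
  have happrox : ∀ x ∈ A, ∃ s : ℕ → 𝒢, (∀ n, s n ∈ S n) ∧ Tendsto s atTop (nhds x) := by
    intro x hx
    have h0 : Tendsto (fun n => Metric.infDist x ((S n : Set 𝒢))) atTop (nhds 0) := by
      simpa [Metric.infDist_zero_of_mem hx] using hconv x
    have hsel : ∀ n : ℕ, ∃ y ∈ (S n : Set 𝒢),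
        dist x y < Metric.infDist x ((S n : Set 𝒢)) + (1 / (n + 1) : ℝ) := by
      intro n
      refine (Metric.infDist_lt_iff ⟨1, (S n).one_mem⟩).1 ?_
      have : (0:ℝ) < 1 / (n + 1) := by positivity
      linarith
    choose s hsmem hsdist using hsel
    refine ⟨s, hsmem, ?_⟩
    rw [tendsto_iff_dist_tendsto_zero]
    have hbound : Tendsto (fun n => Metric.infDist x ((S n : Set 𝒢)) + (1 / (n + 1) : ℝ))
        atTop (nhds 0) := by
      have := h0.add (tendsto_one_div_add_atTop_nhds_zero_nat)
      simpa using this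
    refine squeeze_zero (fun n => dist_nonneg) (fun n => ?_) hbound
    rw [dist_comm]
    exact (hsdist n).le
  refine ⟨{ carrier := A
            one_mem' := ?_
            mul_mem' := ?_
            inv_mem' := ?_ }, rfl⟩
  · intro a b ha hb
    obtain ⟨s, hs, hsl⟩ := happrox a ha
    obtain ⟨t, ht, htl⟩ := happrox b hb
    exact hmem _ ⟨fun n => s n * t n, fun n => (S n).mul_mem (hs n) (ht n),
      (hmul.tendsto (a, b)).comp (hsl.prodMk_nhds htl)⟩
  · exact hmem 1 ⟨fun _ => 1, fun n => (S n).one_mem, tendsto_const_nhds⟩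
  · intro a ha
    obtain ⟨s, hs, hsl⟩ := happrox a ha
    exact hmem _ ⟨fun n => (s n)⁻¹, fun n => (S n).inv_mem (hs n),
      (hinversion.tendsto a).comp hsl⟩
end

section
/- Let X be a compact metrizable space with a Borel probability measure ν, let (G, d) be a metric space with d ≤ 1, let H ⊆ G be a subset, and let H_n ⊆ G be subsets such that for every h ∈ H there exist h_n ∈ H_n with d(h_n, h) → 0. Then for every Borel map f : X → H there exist Borel maps f_n : X → G with f_n(X) ⊆ H_n for each n and ∫_X d(f(x), f_n(x)) dν(x) → 0, provided H (as a subspace of G) is separable and f has relatively compact range after restriction to sets of measure close to 1 (e.g., if G is locally compact second countable). -/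
/-!
Approximate `f` pointwise by simple functions `φₘ` with values in `H` (possible since `H` is
separable); by dominated convergence `∫ d(f, φₘ) → 0`. A simple function has finitely many
values, so replacing each value `h` of `φₘ` by a point of `Hn n` close to `h` moves `φₘ`
uniformly little once `n` is large. A diagonal choice over `m` and `n` then gives the sequence.
-/

open MeasureTheory Filter Topology

theorem exists_seq_mem_tendsto_zero_of_eventually_exists_le {β : Type*} {S : ℕ → Set β}
    {F : β → ℝ} (hF : ∀ b, 0 ≤ F b) (hS : ∀ n, (S n).Nonempty)
    (h : ∀ ε > 0, ∀ᶠ n in atTop, ∃ b ∈ S n, F b ≤ ε) :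
    ∃ g : ℕ → β, (∀ n, g n ∈ S n) ∧ Tendsto (fun n => F (g n)) atTop (𝓝 0) := by
  set a : ℕ → ℝ := fun n => sInf (F '' S n)
  have hbdd : ∀ n, BddBelow (F '' S n) := fun n => ⟨0, by rintro _ ⟨b, -, rfl⟩; exact hF b⟩
  have ha : Tendsto a atTop (𝓝 0) := by
    refine tendsto_order.2 ⟨fun c hc => Eventually.of_forall fun n => hc.trans_le ?_,
      fun c hc => ?_⟩
    · exact le_csInf ((hS n).image F) (by rintro _ ⟨b, -, rfl⟩; exact hF b)
    · filter_upwards [h (c / 2) (half_pos hc)] with n ⟨b, hb, hFb⟩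
      exact (csInf_le (hbdd n) ⟨b, hb, rfl⟩).trans_lt (by linarith)
  have hpick : ∀ n : ℕ, ∃ b ∈ S n, F b < a n + 1 / (n + 1) := fun n => by
    obtain ⟨_, ⟨b, hb, rfl⟩, hlt⟩ :=
      exists_lt_of_csInf_lt ((hS n).image F) (lt_add_of_pos_right (a n) Nat.one_div_pos_of_nat)
    exact ⟨b, hb, hlt⟩
  choose g hgS hg using hpick
  refine ⟨g, hgS, squeeze_zero (fun n => hF _) (fun n => (hg n).le) ?_⟩
  simpa using ha.add tendsto_one_div_add_atTop_nhds_zero_nat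

namespace MeasureTheory.SimpleFunc

theorem tendstoUniformly_comp {X G : Type*} [MeasurableSpace X] [PseudoMetricSpace G]
    (φ : SimpleFunc X G) {a : G → ℕ → G} (ha : ∀ x, Tendsto (a (φ x)) atTop (𝓝 (φ x))) :
    TendstoUniformly (fun n x => a (φ x) n) φ atTop := by
  refine Metric.tendstoUniformly_iff.2 fun ε hε => ?_
  have hrange : ∀ y ∈ φ.range, ∀ᶠ n in atTop, dist y (a y n) < ε := by
    intro y hy
    obtain ⟨x, rfl⟩ := φ.mem_range.1 hy
    simpa [dist_comm] using (ha x).eventually (Metric.ball_mem_nhds _ hε)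
  filter_upwards [(eventually_all_finset φ.range).2 hrange] with n hn x
  exact hn _ (φ.mem_range_self x)

end MeasureTheory.SimpleFunc

section BoundedDist

variable {X G : Type*} [MeasurableSpace X] {ν : Measure X}
  [PseudoMetricSpace G] [SecondCountableTopology G] [MeasurableSpace G] [BorelSpace G]
  {C : ℝ} (hC : ∀ a b : G, dist a b ≤ C)
include hC

theorem integrable_dist_of_forall_dist_le [IsFiniteMeasure ν] {f g : X → G}
    (hf : Measurable f) (hg : Measurable g) : Integrable (fun x => dist (f x) (g x)) ν :=
  .of_bound (hf.dist hg).aestronglyMeasurable C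
    (.of_forall fun x => by simpa [abs_of_nonneg dist_nonneg] using hC (f x) (g x))

theorem tendsto_integral_dist_approxOn [IsFiniteMeasure ν] {f : X → G} (hf : Measurable f)
    {s : Set G} [TopologicalSpace.SeparableSpace s] {y₀ : G} (h₀ : y₀ ∈ s)
    (hfs : ∀ x, f x ∈ s) :
    Tendsto (fun m => ∫ x, dist (f x) (SimpleFunc.approxOn f hf s y₀ h₀ m x) ∂ν) atTop
      (𝓝 0) := by
  have hlim : ∀ x, Tendsto (fun m => dist (f x) (SimpleFunc.approxOn f hf s y₀ h₀ m x))
      atTop (𝓝 0) := fun x => by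
    simpa using (tendsto_const_nhds (x := f x)).dist
      (SimpleFunc.tendsto_approxOn hf h₀ (subset_closure (hfs x)))
  simpa using tendsto_integral_of_dominated_convergence (fun _ => C)
    (fun m => (hf.dist (SimpleFunc.approxOn f hf s y₀ h₀ m).measurable).aestronglyMeasurable)
    (integrable_const C)
    (fun m => .of_forall fun x => by simpa [abs_of_nonneg dist_nonneg] using hC _ _)
    (.of_forall hlim)

theorem integral_dist_le_add_of_forall_dist_le [IsProbabilityMeasure ν] {f g g' : X → G}
    (hf : Measurable f) (hg : Measurable g) (hg' : Measurable g') {δ : ℝ}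
    (hδ : ∀ x, dist (g x) (g' x) ≤ δ) :
    ∫ x, dist (f x) (g' x) ∂ν ≤ ∫ x, dist (f x) (g x) ∂ν + δ := by
  have hint := integrable_dist_of_forall_dist_le (ν := ν) hC hf hg
  calc ∫ x, dist (f x) (g' x) ∂ν ≤ ∫ x, (dist (f x) (g x) + δ) ∂ν :=
        integral_mono (integrable_dist_of_forall_dist_le hC hf hg') (hint.add (integrable_const δ))
          fun x => (dist_triangle _ (g x) _).trans (by gcongr; exact hδ x)
    _ = ∫ x, dist (f x) (g x) ∂ν + δ := by
        rw [integral_add hint (integrable_const δ), integral_const]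
        simp

theorem eventually_exists_integral_dist_le [IsProbabilityMeasure ν] {H : Set G}
    {Hn : ℕ → Set G} {a : G → ℕ → G} (haH : ∀ h ∈ H, ∀ n, a h n ∈ Hn n)
    (ha : ∀ h ∈ H, Tendsto (a h) atTop (𝓝 h)) {f : X → G} (hf : Measurable f)
    (hfH : ∀ x, f x ∈ H) {ε : ℝ} (hε : 0 < ε) :
    ∀ᶠ n in atTop, ∃ g : X → G, (Measurable g ∧ ∀ x, g x ∈ Hn n) ∧
      ∫ x, dist (f x) (g x) ∂ν ≤ ε := by
  obtain ⟨x₀⟩ := nonempty_of_isProbabilityMeasure ν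
  set φ := SimpleFunc.approxOn f hf H (f x₀) (hfH x₀)
  have hφH : ∀ m x, φ m x ∈ H := SimpleFunc.approxOn_mem hf (hfH x₀)
  obtain ⟨m, hm⟩ := ((tendsto_integral_dist_approxOn (ν := ν) hC hf (hfH x₀) hfH).eventually
    (gt_mem_nhds (half_pos hε))).exists
  have hunif := (φ m).tendstoUniformly_comp fun x => ha _ (hφH m x)
  filter_upwards [Metric.tendstoUniformly_iff.1 hunif (ε / 2) (half_pos hε)] with n hn
  refine ⟨fun x => a (φ m x) n, ⟨((φ m).map (a · n)).measurable, fun x => haH _ (hφH m x) n⟩, ?_⟩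
  calc ∫ x, dist (f x) (a (φ m x) n) ∂ν ≤ ∫ x, dist (f x) (φ m x) ∂ν + ε / 2 :=
        integral_dist_le_add_of_forall_dist_le hC hf (φ m).measurable
          ((φ m).map (a · n)).measurable fun x => (hn x).le
    _ ≤ ε := by linarith

end BoundedDist

theorem lusin_approximation_claim_general {X G : Type*}
    [MeasurableSpace X]
    (ν : Measure X) [IsProbabilityMeasure ν]
    [MetricSpace G] [SecondCountableTopology G]
    [MeasurableSpace G] [BorelSpace G]
    (hd1 : ∀ a b : G, dist a b ≤ 1)
    (H : Set G) (Hn : ℕ → Set G)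
    (happrox : ∀ h ∈ H, ∃ hn : ℕ → G, (∀ n, hn n ∈ Hn n) ∧
      Tendsto (fun n => dist (hn n) h) atTop (nhds 0))
    (f : X → G) (hf : Measurable f) (hrange : ∀ x, f x ∈ H) :
    ∃ fn : ℕ → X → G, (∀ n, Measurable (fn n) ∧ ∀ x, fn n x ∈ Hn n) ∧
      Tendsto (fun n => ∫ x, dist (f x) (fn n x) ∂ν) atTop (nhds 0) := by
  obtain ⟨x₀⟩ := nonempty_of_isProbabilityMeasure ν
  have : Nonempty G := ⟨f x₀⟩
  choose! a haH ha using happrox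
  exact exists_seq_mem_tendsto_zero_of_eventually_exists_le
    (S := fun n => {g : X → G | Measurable g ∧ ∀ x, g x ∈ Hn n})
    (fun g => integral_nonneg fun x => dist_nonneg)
    (fun n => ⟨fun _ => a (f x₀) n, measurable_const, fun _ => haH _ (hrange x₀) n⟩)
    fun ε hε => eventually_exists_integral_dist_le hd1 haH
      (fun h hh => tendsto_iff_dist_tendsto_zero.2 (ha h hh)) hf hrange hε

/-- Lusin-type approximation: if every point of `H` is a limit of points of `H_n`, then
every Borel map into `H` is approximated in the integral metric by Borel maps into `H_n`. -/
theorem lusin_approximation_claim {X G : Type*} [TopologicalSpace X] [CompactSpace X]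
    [TopologicalSpace.MetrizableSpace X] [MeasurableSpace X] [BorelSpace X]
    (ν : Measure X) [IsProbabilityMeasure ν]
    [MetricSpace G] [LocallyCompactSpace G] [SecondCountableTopology G]
    [MeasurableSpace G] [BorelSpace G]
    (hd1 : ∀ a b : G, dist a b ≤ 1)
    (H : Set G) (Hn : ℕ → Set G)
    (happrox : ∀ h ∈ H, ∃ hn : ℕ → G, (∀ n, hn n ∈ Hn n) ∧
      Tendsto (fun n => dist (hn n) h) atTop (nhds 0))
    (f : X → G) (hf : Measurable f) (hrange : ∀ x, f x ∈ H) :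
    ∃ fn : ℕ → X → G, (∀ n, Measurable (fn n) ∧ ∀ x, fn n x ∈ Hn n) ∧
      Tendsto (fun n => ∫ x, dist (f x) (fn n x) ∂ν) atTop (nhds 0) :=
  lusin_approximation_claim_general ν hd1 H Hn happrox f hf hrange
end
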